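/- On the half-plane {(x, y) : x > 0}, the Riemannian metric h = x^{-4}(x²dx² + (1+y²)dy² + xy(dxdy + dydx)) is complete. In particular, for any curve γ(t) = (x(t), y(t)) one has h(γ', γ') ≥ (½·(d/dt) ln(x² + y²))², so any curve along which x² + y² is unbounded has infinite h-length; and on any region where x and |y| are bounded by C, h ≥ (1 + 2C²)^{-1}·x^{-2}(dx² + dy²), a multiple of the hyperbolic metric. -/

import Mathlib

/-- The Clairaut metric `h = x⁻⁴(x²dx² + (1+y²)dy² + xy(dxdy+dydx))` on the
half-plane, as a quadratic form on tangent vectors: `hPlus p v` is `h_p(v,v)`. -/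
noncomputable def hPlus (p v : ℝ × ℝ) : ℝ :=
  (p.1 ^ 2 * v.1 ^ 2 + (1 + p.2 ^ 2) * v.2 ^ 2 + 2 * (p.1 * p.2) * (v.1 * v.2)) / p.1 ^ 4

/-- Length of a curve for the metric `hPlus`. -/
noncomputable def lenPlus (c : ℝ → ℝ × ℝ) (a b : ℝ) : ℝ :=
  ∫ t in a..b, Real.sqrt (hPlus (c t) (deriv c t))

/-- Distance on the half-plane `{x > 0}` induced by `hPlus`. -/
noncomputable def distPlus (x y : ℝ × ℝ) : ℝ :=
  sInf {L : ℝ | ∃ c : ℝ → ℝ × ℝ, ∃ a b : ℝ, a ≤ b ∧ c a = x ∧ c b = y ∧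
    (∀ t : ℝ, 0 < (c t).1) ∧ ContDiff ℝ 1 c ∧ L = lenPlus c a b}

/-- Completeness of `hPlus` on the half-plane. -/
def CompletePlus : Prop :=
  ∀ u : ℕ → ℝ × ℝ, (∀ n, 0 < (u n).1) →
    (∀ ε : ℝ, 0 < ε → ∃ N : ℕ, ∀ m ≥ N, ∀ n ≥ N, distPlus (u m) (u n) < ε) →
    ∃ x : ℝ × ℝ, 0 < x.1 ∧ ∀ ε : ℝ, 0 < ε → ∃ N : ℕ, ∀ n ≥ N, distPlus (u n) x < ε

/-! ### Auxiliary lemmas -/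

lemma hasDerivAt_fst {f : ℝ → ℝ × ℝ} {f' : ℝ × ℝ} {x : ℝ} (h : HasDerivAt f f' x) :
    HasDerivAt (fun t => (f t).1) f'.1 x := h.fst

lemma hasDerivAt_snd {f : ℝ → ℝ × ℝ} {f' : ℝ × ℝ} {x : ℝ} (h : HasDerivAt f f' x) :
    HasDerivAt (fun t => (f t).2) f'.2 x := h.snd

lemma hPlus_eq (p v : ℝ × ℝ) :
    hPlus p v = ((p.1 * v.1 + p.2 * v.2) ^ 2 + v.2 ^ 2) / p.1 ^ 4 := by
  simp only [hPlus]; ring_nf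

lemma hPlus_nonneg (p v : ℝ × ℝ) : 0 ≤ hPlus p v := by
  rw [hPlus_eq]; positivity

/-- Part 3: lower bound by the hyperbolic metric on bounded regions. -/
lemma part3 (C : ℝ) (p v : ℝ × ℝ) (h1 : 0 < p.1) (h2 : p.1 ≤ C) (h3 : |p.2| ≤ C) :
    (1 + 2 * C ^ 2)⁻¹ * ((v.1 ^ 2 + v.2 ^ 2) / p.1 ^ 2) ≤ hPlus p v := by
  have hC : 0 < C := lt_of_lt_of_le h1 h2
  have hp2 : p.2 ^ 2 ≤ C ^ 2 := by
    simpa [sq_abs] using pow_le_pow_left₀ (abs_nonneg p.2) h3 2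
  have hp1 : p.1 ^ 2 ≤ C ^ 2 := pow_le_pow_left₀ h1.le h2 2
  have key : (1 + 2 * C ^ 2)⁻¹ * ((v.1 ^ 2 + v.2 ^ 2) / p.1 ^ 2)
      = (v.1 ^ 2 + v.2 ^ 2) / ((1 + 2 * C ^ 2) * p.1 ^ 2) := by
    rw [inv_mul_eq_div, div_div, mul_comm]
  rw [key, hPlus_eq, div_le_div_iff₀ (by positivity) (by positivity)]
  nlinarith [sq_nonneg (p.1 * (2 * C ^ 2 * (p.1 * v.1 + p.2 * v.2) + p.2 * v.2)),
    mul_nonneg (mul_nonneg (sq_nonneg p.1) (sq_nonneg v.2)) (sub_nonneg.2 hp2),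
    mul_nonneg (mul_nonneg (sq_nonneg (C * p.1)) (sq_nonneg v.2)) (sub_nonneg.2 hp1),
    mul_nonneg (mul_nonneg (sq_nonneg (C * p.1)) (sq_nonneg v.2)) (sub_nonneg.2 hp2),
    sq_nonneg (C * p.1 * v.2), mul_pos hC hC]

/-- Part 2 algebra. -/
lemma alg2 (x y v1 v2 : ℝ) (hx : 0 < x) :
    ((x * v1 + y * v2) / (x ^ 2 + y ^ 2)) ^ 2 ≤ ((x * v1 + y * v2) ^ 2 + v2 ^ 2) / x ^ 4 := by
  rw [div_pow, div_le_div_iff₀ (by positivity) (by positivity)]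
  nlinarith [mul_nonneg (sq_nonneg (x * v1 + y * v2))
      (show (0:ℝ) ≤ (x ^ 2 + y ^ 2) ^ 2 - x ^ 4 by nlinarith [sq_nonneg (x * y), sq_nonneg (y ^ 2)]),
    mul_nonneg (sq_nonneg v2) (sq_nonneg (x ^ 2 + y ^ 2))]

lemma hPlus_upper (δ R : ℝ) (p v : ℝ × ℝ) (hδ : 0 < δ) (hδp : δ ≤ p.1)
    (hpR : p.1 ≤ R) (h2R : |p.2| ≤ R) :
    hPlus p v ≤ (1 + 2 * R ^ 2) / δ ^ 4 * (v.1 ^ 2 + v.2 ^ 2) := by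
  have hp2 : p.2 ^ 2 ≤ R ^ 2 := by simpa [sq_abs] using pow_le_pow_left₀ (abs_nonneg p.2) h2R 2
  rw [hPlus_eq]
  have h1 : (p.1 * v.1 + p.2 * v.2) ^ 2 + v.2 ^ 2 ≤ (1 + 2 * R ^ 2) * (v.1 ^ 2 + v.2 ^ 2) := by
    have hp1 : p.1 ^ 2 ≤ R ^ 2 := pow_le_pow_left₀ (hδ.trans_le hδp).le hpR 2
    nlinarith [sq_nonneg (p.1 * v.1 - p.2 * v.2), sq_nonneg v.1, sq_nonneg v.2]
  have h2 : δ ^ 4 ≤ p.1 ^ 4 := pow_le_pow_left₀ hδ.le hδp 4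
  calc ((p.1 * v.1 + p.2 * v.2) ^ 2 + v.2 ^ 2) / p.1 ^ 4
      ≤ ((1 + 2 * R ^ 2) * (v.1 ^ 2 + v.2 ^ 2)) / δ ^ 4 :=
        div_le_div₀ (by positivity) h1 (by positivity) h2
    _ = (1 + 2 * R ^ 2) / δ ^ 4 * (v.1 ^ 2 + v.2 ^ 2) := by ring

lemma sqrtH_cont (c : ℝ → ℝ × ℝ) (hc : ContDiff ℝ 1 c) (hpos : ∀ t, 0 < (c t).1) :
    Continuous fun t => Real.sqrt (hPlus (c t) (deriv c t)) := by
  have hcc := hc.continuous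
  have hd : Continuous (deriv c) := hc.continuous_deriv le_rfl
  have h1 : Continuous fun t => (c t).1 := hcc.fst
  have h2 : Continuous fun t => (c t).2 := hcc.snd
  have h3 : Continuous fun t => (deriv c t).1 := hd.fst
  have h4 : Continuous fun t => (deriv c t).2 := hd.snd
  apply Real.continuous_sqrt.comp
  simp only [hPlus]
  exact Continuous.div (by continuity) (by continuity)
    (fun t => by have := hpos t; positivity)

lemma lenPlus_nonneg (c : ℝ → ℝ × ℝ) (a b : ℝ) (hab : a ≤ b) : 0 ≤ lenPlus c a b :=
  intervalIntegral.integral_nonneg hab (fun _ _ => Real.sqrt_nonneg _)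

lemma ftc_bound (c : ℝ → ℝ × ℝ) (hc : ContDiff ℝ 1 c) (hpos : ∀ t, 0 < (c t).1)
    (a b : ℝ) (G G' : ℝ → ℝ) (hG : ∀ s, HasDerivAt G (G' s) s)
    (hG' : Continuous G') (K : ℝ) (hK : 0 ≤ K)
    (hbound : ∀ s ∈ Set.Icc a b, |G' s| ≤ K * Real.sqrt (hPlus (c s) (deriv c s))) :
    ∀ t ∈ Set.Icc a b, |G t - G a| ≤ K * lenPlus c a b := by
  intro t ht
  set φ := fun s => Real.sqrt (hPlus (c s) (deriv c s)) with hφdef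
  have hφ : Continuous φ := sqrtH_cont c hc hpos
  have hat : a ≤ t := ht.1
  have htb : t ≤ b := ht.2
  have h1 : ∫ s in a..t, G' s = G t - G a :=
    intervalIntegral.integral_eq_sub_of_hasDerivAt (fun s _ => hG s)
      ((hG'.intervalIntegrable a t))
  have h2 : |G t - G a| ≤ ∫ s in a..t, |G' s| := by
    rw [← h1]; exact intervalIntegral.abs_integral_le_integral_abs hat
  have h3 : ∫ s in a..t, |G' s| ≤ ∫ s in a..t, K * φ s := by
    apply intervalIntegral.integral_mono_on hat (hG'.abs.intervalIntegrable a t)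
      ((continuous_const.mul hφ).intervalIntegrable a t)
    exact fun s hs => hbound s ⟨hs.1, hs.2.trans htb⟩
  have h4 : ∫ s in a..t, K * φ s = K * ∫ s in a..t, φ s := by
    simp [intervalIntegral.integral_const_mul]
  have h5 : ∫ s in a..t, φ s ≤ ∫ s in a..b, φ s := by
    have := intervalIntegral.integral_add_adjacent_intervals
      (hφ.intervalIntegrable a t : IntervalIntegrable φ MeasureTheory.volume a t)
      (hφ.intervalIntegrable t b : IntervalIntegrable φ MeasureTheory.volume t b)
    have h6 : 0 ≤ ∫ s in t..b, φ s :=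
      intervalIntegral.integral_nonneg htb (fun _ _ => Real.sqrt_nonneg _)
    linarith
  calc |G t - G a| ≤ ∫ s in a..t, |G' s| := h2
    _ ≤ K * ∫ s in a..t, φ s := by rw [← h4]; exact h3
    _ ≤ K * ∫ s in a..b, φ s := mul_le_mul_of_nonneg_left h5 hK
    _ = K * lenPlus c a b := rfl

/-- Part 2. -/
lemma part2 (c : ℝ → ℝ × ℝ) (t : ℝ) (hd : DifferentiableAt ℝ c t) (hx : 0 < (c t).1) :
    ((1/2) * deriv (fun s => Real.log ((c s).1 ^ 2 + (c s).2 ^ 2)) t) ^ 2 ≤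
      hPlus (c t) (deriv c t) := by
  have h := hd.hasDerivAt
  have hs : (0:ℝ) < (c t).1 ^ 2 + (c t).2 ^ 2 := by positivity
  have hr : HasDerivAt (fun s => (c s).1 ^ 2 + (c s).2 ^ 2)
      (2 * (c t).1 * (deriv c t).1 + 2 * (c t).2 * (deriv c t).2) t := by
    have := ((hasDerivAt_fst h).fun_pow 2).add ((hasDerivAt_snd h).fun_pow 2)
    exact this.congr_deriv (by push_cast; ring)
  have hlog := hr.log (ne_of_gt hs)
  rw [hlog.deriv, hPlus_eq]
  have e : (1/2) * ((2 * (c t).1 * (deriv c t).1 + 2 * (c t).2 * (deriv c t).2) /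
      ((c t).1 ^ 2 + (c t).2 ^ 2))
      = ((c t).1 * (deriv c t).1 + (c t).2 * (deriv c t).2) / ((c t).1 ^ 2 + (c t).2 ^ 2) := by
    ring
  rw [e]
  exact alg2 _ _ _ _ hx

noncomputable def Fh (p : ℝ × ℝ) : ℝ := (1/2) * Real.log (p.1 ^ 2 + p.2 ^ 2)

lemma Fh_hasDeriv (c : ℝ → ℝ × ℝ) (hc : ContDiff ℝ 1 c) (hpos : ∀ t, 0 < (c t).1) (s : ℝ) :
    HasDerivAt (fun u => Fh (c u))
      (((c s).1 * (deriv c s).1 + (c s).2 * (deriv c s).2) / ((c s).1 ^ 2 + (c s).2 ^ 2)) s := by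
  have h := (hc.differentiable one_ne_zero s).hasDerivAt
  have hs : (0:ℝ) < (c s).1 ^ 2 + (c s).2 ^ 2 := by have := hpos s; positivity
  have hr : HasDerivAt (fun u => (c u).1 ^ 2 + (c u).2 ^ 2)
      (2 * (c s).1 * (deriv c s).1 + 2 * (c s).2 * (deriv c s).2) s := by
    have := ((hasDerivAt_fst h).fun_pow 2).add ((hasDerivAt_snd h).fun_pow 2)
    exact this.congr_deriv (by push_cast; ring)
  have hlog := (hr.log (ne_of_gt hs)).const_mul (1/2 : ℝ)
  simp only [Fh]
  exact hlog.congr_deriv (by field_simp)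

lemma logr_var (c : ℝ → ℝ × ℝ) (hc : ContDiff ℝ 1 c) (hpos : ∀ t, 0 < (c t).1)
    (a b : ℝ) :
    ∀ t ∈ Set.Icc a b, |Fh (c t) - Fh (c a)| ≤ lenPlus c a b := by
  have h1 : Continuous fun t => (c t).1 := hc.continuous.fst
  have h2 : Continuous fun t => (c t).2 := hc.continuous.snd
  have hd := hc.continuous_deriv le_rfl
  have h3 : Continuous fun t => (deriv c t).1 := hd.fst
  have h4 : Continuous fun t => (deriv c t).2 := hd.snd
  have hcont : Continuous fun s =>
      ((c s).1 * (deriv c s).1 + (c s).2 * (deriv c s).2) / ((c s).1 ^ 2 + (c s).2 ^ 2) :=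
    Continuous.div (by continuity) (by continuity)
      (fun s => by have := hpos s; positivity)
  have := ftc_bound c hc hpos a b (fun u => Fh (c u)) _ (Fh_hasDeriv c hc hpos) hcont 1
    one_pos.le (fun s _ => by
      rw [one_mul]
      apply Real.abs_le_sqrt
      rw [hPlus_eq]
      exact alg2 _ _ _ _ (hpos s))
  simpa using this

/-- Velocity bounds from part 3. -/
lemma vel_bound (C : ℝ) (p v : ℝ × ℝ) (h1 : 0 < p.1) (h2 : p.1 ≤ C) (h3 : |p.2| ≤ C) :
    |v.1| / p.1 ≤ Real.sqrt (1 + 2*C^2) * Real.sqrt (hPlus p v) ∧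
    |v.1| ≤ C * Real.sqrt (1 + 2*C^2) * Real.sqrt (hPlus p v) ∧
    |v.2| ≤ C * Real.sqrt (1 + 2*C^2) * Real.sqrt (hPlus p v) := by
  have hC : 0 < C := h1.trans_le h2
  have hh := hPlus_nonneg p v
  have key : (v.1^2 + v.2^2) / p.1^2 ≤ (1 + 2*C^2) * hPlus p v := by
    have := part3 C p v h1 h2 h3
    rwa [inv_mul_le_iff₀ (by positivity)] at this
  have sq1 : (v.1/p.1)^2 ≤ (1 + 2*C^2) * hPlus p v := by
    calc (v.1/p.1)^2 = v.1^2/p.1^2 := by ring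
    _ ≤ (v.1^2 + v.2^2)/p.1^2 := by gcongr; nlinarith [sq_nonneg v.2]
    _ ≤ _ := key
  have sq2 : (v.2/p.1)^2 ≤ (1 + 2*C^2) * hPlus p v := by
    calc (v.2/p.1)^2 = v.2^2/p.1^2 := by ring
    _ ≤ (v.1^2 + v.2^2)/p.1^2 := by gcongr; nlinarith [sq_nonneg v.1]
    _ ≤ _ := key
  have s1 : |v.1| / p.1 ≤ Real.sqrt (1+2*C^2) * Real.sqrt (hPlus p v) := by
    rw [show |v.1|/p.1 = |v.1/p.1| by rw [abs_div, abs_of_pos h1],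
      ← Real.sqrt_mul (by positivity) (hPlus p v)]
    exact Real.abs_le_sqrt sq1
  have s2 : |v.2| / p.1 ≤ Real.sqrt (1+2*C^2) * Real.sqrt (hPlus p v) := by
    rw [show |v.2|/p.1 = |v.2/p.1| by rw [abs_div, abs_of_pos h1],
      ← Real.sqrt_mul (by positivity) (hPlus p v)]
    exact Real.abs_le_sqrt sq2
  refine ⟨s1, ?_, ?_⟩
  · have e : |v.1| = (|v.1|/p.1) * p.1 := by field_simp
    rw [e]
    calc (|v.1|/p.1) * p.1 ≤ (Real.sqrt (1+2*C^2) * Real.sqrt (hPlus p v)) * C :=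
      mul_le_mul s1 h2 h1.le (by positivity)
    _ = C * Real.sqrt (1+2*C^2) * Real.sqrt (hPlus p v) := by ring
  · have e : |v.2| = (|v.2|/p.1) * p.1 := by field_simp
    rw [e]
    calc (|v.2|/p.1) * p.1 ≤ (Real.sqrt (1+2*C^2) * Real.sqrt (hPlus p v)) * C :=
      mul_le_mul s2 h2 h1.le (by positivity)
    _ = C * Real.sqrt (1+2*C^2) * Real.sqrt (hPlus p v) := by ring

lemma coord_var (c : ℝ → ℝ × ℝ) (hc : ContDiff ℝ 1 c) (hpos : ∀ t, 0 < (c t).1)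
    (a b : ℝ) (hab : a ≤ b) (C : ℝ)
    (hreg : ∀ s ∈ Set.Icc a b, (c s).1 ≤ C ∧ |(c s).2| ≤ C) :
    |Real.log (c b).1 - Real.log (c a).1| ≤ Real.sqrt (1+2*C^2) * lenPlus c a b ∧
    |(c b).1 - (c a).1| ≤ C * Real.sqrt (1+2*C^2) * lenPlus c a b ∧
    |(c b).2 - (c a).2| ≤ C * Real.sqrt (1+2*C^2) * lenPlus c a b := by
  have hC : 0 < C := (hpos a).trans_le (hreg a ⟨le_refl a, hab⟩).1
  have hd := hc.continuous_deriv le_rfl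
  have hb : b ∈ Set.Icc a b := Set.right_mem_Icc.2 hab
  refine ⟨?_, ?_, ?_⟩
  · exact ftc_bound c hc hpos a b (fun s => Real.log ((c s).1))
      (fun s => (deriv c s).1 / (c s).1)
      (fun s => (hasDerivAt_fst (hc.differentiable one_ne_zero s).hasDerivAt).log (ne_of_gt (hpos s)))
      (Continuous.div hd.fst hc.continuous.fst (fun s => ne_of_gt (hpos s)))
      _ (Real.sqrt_nonneg _)
      (fun s hs => by
        have := (vel_bound C (c s) (deriv c s) (hpos s) (hreg s hs).1 (hreg s hs).2).1
        simpa [abs_div, abs_of_pos (hpos s)] using this) b hb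
  · exact ftc_bound c hc hpos a b (fun s => (c s).1) (fun s => (deriv c s).1)
      (fun s => hasDerivAt_fst (hc.differentiable one_ne_zero s).hasDerivAt) hd.fst
      _ (by positivity)
      (fun s hs =>
        (vel_bound C (c s) (deriv c s) (hpos s) (hreg s hs).1 (hreg s hs).2).2.1) b hb
  · exact ftc_bound c hc hpos a b (fun s => (c s).2) (fun s => (deriv c s).2)
      (fun s => hasDerivAt_snd (hc.differentiable one_ne_zero s).hasDerivAt) hd.snd
      _ (by positivity)
      (fun s hs =>
        (vel_bound C (c s) (deriv c s) (hpos s) (hreg s hs).1 (hreg s hs).2).2.2) b hb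

lemma region (c : ℝ → ℝ × ℝ) (hc : ContDiff ℝ 1 c) (hpos : ∀ t, 0 < (c t).1)
    (a b : ℝ) (t : ℝ) (ht : t ∈ Set.Icc a b) :
    (c t).1 ≤ Real.exp (|Fh (c a)| + lenPlus c a b) ∧
    |(c t).2| ≤ Real.exp (|Fh (c a)| + lenPlus c a b) := by
  have h1 := logr_var c hc hpos a b t ht
  have h2 : Fh (c t) ≤ |Fh (c a)| + lenPlus c a b := by
    have := le_abs_self (Fh (c a))
    have := (abs_le.1 h1).2
    linarith
  have hs : (0:ℝ) < (c t).1 ^ 2 + (c t).2 ^ 2 := by have := hpos t; positivity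
  have hexp : Real.exp (Fh (c t)) = Real.sqrt ((c t).1^2 + (c t).2^2) := by
    rw [Real.sqrt_eq_rpow, Real.rpow_def_of_pos hs]
    simp only [Fh]
    congr 1
    ring
  have hmono := Real.exp_le_exp.2 h2
  rw [hexp] at hmono
  constructor
  · refine le_trans ?_ hmono
    exact (Real.le_sqrt (hpos t).le hs.le).2 (by nlinarith [sq_nonneg (c t).2])
  · refine le_trans ?_ hmono
    exact Real.abs_le_sqrt (by nlinarith [sq_nonneg (c t).1])

/-! ### The smooth segment curve -/

noncomputable def segC (p q : ℝ × ℝ) : ℝ → ℝ × ℝ :=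
  fun t => (p.1 + Real.smoothTransition t * (q.1 - p.1),
            p.2 + Real.smoothTransition t * (q.2 - p.2))

lemma convex_bounds (a b φ : ℝ) (h0 : 0 ≤ φ) (h1 : φ ≤ 1) :
    min a b ≤ a + φ * (b - a) ∧ a + φ * (b - a) ≤ max a b := by
  rcases le_total a b with h | h
  · rw [min_eq_left h, max_eq_right h]; constructor <;> nlinarith
  · rw [min_eq_right h, max_eq_left h]; constructor <;> nlinarith

lemma abs_convex (a b φ : ℝ) (h0 : 0 ≤ φ) (h1 : φ ≤ 1) (C : ℝ) (ha : |a| ≤ C) (hb : |b| ≤ C) :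
    |a + φ * (b - a)| ≤ C := by
  have e : a + φ*(b-a) = (1-φ)*a + φ*b := by ring
  rw [e]
  calc |(1-φ)*a + φ*b| ≤ |(1-φ)*a| + |φ*b| := abs_add_le _ _
  _ = (1-φ)*|a| + φ*|b| := by
      rw [abs_mul, abs_mul, abs_of_nonneg (by linarith : (0:ℝ) ≤ 1-φ), abs_of_nonneg h0]
  _ ≤ (1-φ)*C + φ*C :=
      add_le_add (mul_le_mul_of_nonneg_left ha (by linarith)) (mul_le_mul_of_nonneg_left hb h0)
  _ = C := by ring

lemma segC_contDiff (p q : ℝ × ℝ) : ContDiff ℝ 1 (segC p q) := by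
  have h : ContDiff ℝ 1 Real.smoothTransition := by
    exact_mod_cast Real.smoothTransition.contDiff (n := 1)
  exact ContDiff.prodMk (ContDiff.add contDiff_const (h.mul contDiff_const))
    (ContDiff.add contDiff_const (h.mul contDiff_const))

lemma segC_zero (p q : ℝ × ℝ) : segC p q 0 = p := by
  simp [segC, Real.smoothTransition.zero_of_nonpos le_rfl]

lemma segC_one (p q : ℝ × ℝ) : segC p q 1 = q := by
  simp [segC, Real.smoothTransition.one_of_one_le le_rfl]

lemma segC_pos (p q : ℝ × ℝ) (δ : ℝ) (hδ : 0 < δ) (hp : δ ≤ p.1) (hq : δ ≤ q.1) :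
    ∀ t, δ < (segC p q t).1 + δ ∧ δ ≤ (segC p q t).1 := by
  intro t
  have h := convex_bounds p.1 q.1 (Real.smoothTransition t)
    (Real.smoothTransition.nonneg t) (Real.smoothTransition.le_one t)
  have : δ ≤ (segC p q t).1 := le_trans (le_min hp hq) h.1
  exact ⟨by linarith, this⟩

lemma segC_deriv (p q : ℝ × ℝ) (t : ℝ) :
    HasDerivAt (segC p q)
      (deriv Real.smoothTransition t * (q.1 - p.1),
       deriv Real.smoothTransition t * (q.2 - p.2)) t := by
  have h : ContDiff ℝ 1 Real.smoothTransition := by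
    exact_mod_cast Real.smoothTransition.contDiff (n := 1)
  have hφ : HasDerivAt Real.smoothTransition (deriv Real.smoothTransition t) t :=
    (h.differentiable one_ne_zero t).hasDerivAt
  exact ((hφ.mul_const (q.1 - p.1)).const_add p.1).prodMk
    ((hφ.mul_const (q.2 - p.2)).const_add p.2)

lemma distSet_bdd (x y : ℝ × ℝ) :
    BddBelow {L : ℝ | ∃ c : ℝ → ℝ × ℝ, ∃ a b : ℝ, a ≤ b ∧ c a = x ∧ c b = y ∧
      (∀ t : ℝ, 0 < (c t).1) ∧ ContDiff ℝ 1 c ∧ L = lenPlus c a b} := by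
  refine ⟨0, fun L hL => ?_⟩
  obtain ⟨c, a, b, hab, _, _, _, _, rfl⟩ := hL
  exact lenPlus_nonneg c a b hab

lemma distPlus_le (x y : ℝ × ℝ) (c : ℝ → ℝ × ℝ) (a b : ℝ) (hab : a ≤ b)
    (h1 : c a = x) (h2 : c b = y) (h3 : ∀ t, 0 < (c t).1) (h4 : ContDiff ℝ 1 c) :
    distPlus x y ≤ lenPlus c a b :=
  csInf_le (distSet_bdd x y) ⟨c, a, b, hab, h1, h2, h3, h4, rfl⟩

lemma distPlus_lt (x y : ℝ × ℝ) (hx : 0 < x.1) (hy : 0 < y.1) (ε : ℝ)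
    (h : distPlus x y < ε) :
    ∃ c : ℝ → ℝ × ℝ, ∃ a b : ℝ, a ≤ b ∧ c a = x ∧ c b = y ∧
      (∀ t, 0 < (c t).1) ∧ ContDiff ℝ 1 c ∧ lenPlus c a b < ε := by
  have hδ : (0:ℝ) < min x.1 y.1 := lt_min hx hy
  have hne : {L : ℝ | ∃ c : ℝ → ℝ × ℝ, ∃ a b : ℝ, a ≤ b ∧ c a = x ∧ c b = y ∧
      (∀ t : ℝ, 0 < (c t).1) ∧ ContDiff ℝ 1 c ∧ L = lenPlus c a b}.Nonempty := by
    refine ⟨lenPlus (segC x y) 0 1, segC x y, 0, 1, zero_le_one, segC_zero x y, segC_one x y,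
      fun t => ?_, segC_contDiff x y, rfl⟩
    exact lt_of_lt_of_le hδ
      (segC_pos x y (min x.1 y.1) hδ (min_le_left _ _) (min_le_right _ _) t).2
  obtain ⟨L, hL, hLε⟩ := (csInf_lt_iff (distSet_bdd x y) hne).1 h
  obtain ⟨c, a, b, hab, h1, h2, h3, h4, rfl⟩ := hL
  exact ⟨c, a, b, hab, h1, h2, h3, h4, hLε⟩

lemma sqrt_add_sq_le (a b : ℝ) : Real.sqrt (a^2 + b^2) ≤ |a| + |b| := by
  have h : a^2 + b^2 ≤ (|a| + |b|)^2 := by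
    nlinarith [mul_nonneg (abs_nonneg a) (abs_nonneg b), sq_abs a, sq_abs b]
  calc Real.sqrt (a^2 + b^2) ≤ Real.sqrt ((|a| + |b|)^2) := Real.sqrt_le_sqrt h
  _ = |a| + |b| := Real.sqrt_sq (by positivity)

/-- Upper bound on `distPlus` via the smooth segment. -/
lemma seg_len_le (p q : ℝ × ℝ) (δ R D : ℝ) (hδ : 0 < δ) (hδp : δ ≤ p.1) (hδq : δ ≤ q.1)
    (hpR : p.1 ≤ R) (hp2R : |p.2| ≤ R) (hqR : q.1 ≤ R) (hq2R : |q.2| ≤ R)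
    (hD : ∀ t ∈ Set.Icc (0:ℝ) 1, |deriv Real.smoothTransition t| ≤ D) :
    distPlus p q ≤ Real.sqrt ((1 + 2*R^2)/δ^4) * D * (|q.1 - p.1| + |q.2 - p.2|) := by
  have hD0 : 0 ≤ D := le_trans (abs_nonneg _) (hD 0 ⟨le_refl 0, zero_le_one⟩)
  have hpos : ∀ t, 0 < (segC p q t).1 :=
    fun t => lt_of_lt_of_le hδ (segC_pos p q δ hδ hδp hδq t).2
  have hcd := segC_contDiff p q
  refine le_trans (distPlus_le p q (segC p q) 0 1 zero_le_one (segC_zero p q) (segC_one p q)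
    hpos hcd) ?_
  set B := Real.sqrt ((1 + 2*R^2)/δ^4) * D * (|q.1 - p.1| + |q.2 - p.2|) with hB
  have hBn : (0:ℝ) ≤ B := by positivity
  have key : ∀ t ∈ Set.Icc (0:ℝ) 1,
      Real.sqrt (hPlus (segC p q t) (deriv (segC p q) t)) ≤ B := by
    intro t ht
    have hv : deriv (segC p q) t =
        (deriv Real.smoothTransition t * (q.1 - p.1),
         deriv Real.smoothTransition t * (q.2 - p.2)) := (segC_deriv p q t).deriv
    have hmem := convex_bounds p.1 q.1 (Real.smoothTransition t)
      (Real.smoothTransition.nonneg t) (Real.smoothTransition.le_one t)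
    have hup : hPlus (segC p q t) (deriv (segC p q) t) ≤
        (1 + 2*R^2)/δ^4 * ((deriv (segC p q) t).1^2 + (deriv (segC p q) t).2^2) := by
      apply hPlus_upper δ R _ _ hδ
      · exact (segC_pos p q δ hδ hδp hδq t).2
      · exact le_trans hmem.2 (max_le hpR hqR)
      · exact abs_convex p.2 q.2 (Real.smoothTransition t)
          (Real.smoothTransition.nonneg t) (Real.smoothTransition.le_one t) R hp2R hq2R
    calc Real.sqrt (hPlus (segC p q t) (deriv (segC p q) t))
        ≤ Real.sqrt ((1 + 2*R^2)/δ^4 *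
            ((deriv (segC p q) t).1^2 + (deriv (segC p q) t).2^2)) := Real.sqrt_le_sqrt hup
      _ = Real.sqrt ((1 + 2*R^2)/δ^4) *
            Real.sqrt ((deriv (segC p q) t).1^2 + (deriv (segC p q) t).2^2) :=
          Real.sqrt_mul (by positivity) _
      _ ≤ Real.sqrt ((1 + 2*R^2)/δ^4) *
            (|(deriv (segC p q) t).1| + |(deriv (segC p q) t).2|) := by
          exact mul_le_mul_of_nonneg_left (sqrt_add_sq_le _ _) (Real.sqrt_nonneg _)
      _ ≤ Real.sqrt ((1 + 2*R^2)/δ^4) * (D * (|q.1 - p.1| + |q.2 - p.2|)) := by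
          apply mul_le_mul_of_nonneg_left _ (Real.sqrt_nonneg _)
          rw [hv]
          simp only [abs_mul]
          have := hD t ht
          nlinarith [abs_nonneg (q.1 - p.1), abs_nonneg (q.2 - p.2),
            abs_nonneg (deriv Real.smoothTransition t)]
      _ = B := by rw [hB]; ring
  have : lenPlus (segC p q) 0 1 ≤ ∫ _t in (0:ℝ)..1, B := by
    apply intervalIntegral.integral_mono_on zero_le_one
      ((sqrtH_cont (segC p q) hcd hpos).intervalIntegrable 0 1)
      (intervalIntegrable_const) key
  calc lenPlus (segC p q) 0 1 ≤ ∫ _t in (0:ℝ)..1, B := this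
  _ = B := by simp

set_option maxHeartbeats 1000000 in
/-- On the half-plane `{x > 0}`, the Riemannian metric `hPlus` is
complete; along any curve it dominates `(½ (ln(x²+y²))')²`, and on any region where
`x` and `|y|` are bounded by `C` it is bounded below by `(1+2C²)⁻¹` times the
hyperbolic metric `x⁻²(dx²+dy²)`. -/
theorem stmt18 :
    CompletePlus ∧
    (∀ (c : ℝ → ℝ × ℝ) (t : ℝ), DifferentiableAt ℝ c t → 0 < (c t).1 →
      ((1/2) * deriv (fun s => Real.log ((c s).1 ^ 2 + (c s).2 ^ 2)) t) ^ 2 ≤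
        hPlus (c t) (deriv c t)) ∧
    (∀ (C : ℝ) (p v : ℝ × ℝ), 0 < p.1 → p.1 ≤ C → |p.2| ≤ C →
      (1 + 2 * C ^ 2)⁻¹ * ((v.1 ^ 2 + v.2 ^ 2) / p.1 ^ 2) ≤ hPlus p v) := by
  refine ⟨?_, fun c t hd hx => part2 c t hd hx, fun C p v h1 h2 h3 => part3 C p v h1 h2 h3⟩
  intro u hu hcau
  -- a uniform bound for the derivative of the smooth transition function
  obtain ⟨D, hD⟩ : ∃ D, ∀ t ∈ Set.Icc (0:ℝ) 1, |deriv Real.smoothTransition t| ≤ D := by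
    have h : ContDiff ℝ 1 Real.smoothTransition := by
      exact_mod_cast Real.smoothTransition.contDiff (n := 1)
    obtain ⟨D, hD⟩ := isCompact_Icc.exists_bound_of_continuousOn
      ((h.continuous_deriv le_rfl).continuousOn (s := Set.Icc (0:ℝ) 1))
    exact ⟨D, fun t ht => by simpa [Real.norm_eq_abs] using hD t ht⟩
  -- Step 1 : a uniform bound on |Fh (u n)|
  obtain ⟨N₁, hN₁⟩ := hcau 1 one_pos
  set M : ℝ := |Fh (u N₁)| + 1 with hM
  have hFh : ∀ n ≥ N₁, |Fh (u n)| ≤ M := by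
    intro n hn
    obtain ⟨c, a, b, hab, h1, h2, h3, h4, hlen⟩ :=
      distPlus_lt (u N₁) (u n) (hu N₁) (hu n) 1 (hN₁ N₁ le_rfl n hn)
    have hv := logr_var c h4 h3 a b b (Set.right_mem_Icc.2 hab)
    rw [h1, h2] at hv
    have h5 : |Fh (u n)| ≤ |Fh (u N₁)| + |Fh (u n) - Fh (u N₁)| := by
      calc |Fh (u n)| = |Fh (u N₁) + (Fh (u n) - Fh (u N₁))| := by ring_nf
      _ ≤ _ := abs_add_le _ _
    rw [hM]; linarith
  set C : ℝ := Real.exp (M + 1) with hCdef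
  have hC0 : 0 < C := Real.exp_pos _
  set K : ℝ := Real.sqrt (1 + 2*C^2) with hKdef
  have hK0 : 0 < K := Real.sqrt_pos.2 (by positivity)
  -- Step 2 : the main coordinatewise Cauchy estimate
  have main : ∀ ε : ℝ, 0 < ε → ε ≤ 1 → ∃ N, ∀ m ≥ N, ∀ n ≥ N,
      |Real.log (u n).1 - Real.log (u m).1| ≤ K * ε ∧
      |(u n).1 - (u m).1| ≤ C * K * ε ∧ |(u n).2 - (u m).2| ≤ C * K * ε := by
    intro ε hε hε1
    obtain ⟨N₂, hN₂⟩ := hcau ε hε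
    refine ⟨max N₁ N₂, fun m hm n hn => ?_⟩
    have hm1 := le_trans (le_max_left N₁ N₂) hm
    have hm2 := le_trans (le_max_right N₁ N₂) hm
    have hn2 := le_trans (le_max_right N₁ N₂) hn
    obtain ⟨c, a, b, hab, h1, h2, h3, h4, hlen⟩ :=
      distPlus_lt (u m) (u n) (hu m) (hu n) ε (hN₂ m hm2 n hn2)
    have hlen0 := lenPlus_nonneg c a b hab
    have hreg : ∀ s ∈ Set.Icc a b, (c s).1 ≤ C ∧ |(c s).2| ≤ C := by
      intro s hs
      have hr := region c h4 h3 a b s hs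
      have hbound : Real.exp (|Fh (c a)| + lenPlus c a b) ≤ C := by
        rw [hCdef]
        apply Real.exp_le_exp.2
        rw [h1]
        have := hFh m hm1
        linarith
      exact ⟨le_trans hr.1 hbound, le_trans hr.2 hbound⟩
    obtain ⟨e1, e2, e3⟩ := coord_var c h4 h3 a b hab C hreg
    rw [h1, h2] at e1 e2 e3
    refine ⟨le_trans e1 ?_, le_trans e2 ?_, le_trans e3 ?_⟩
    · exact mul_le_mul_of_nonneg_left hlen.le hK0.le
    · exact mul_le_mul_of_nonneg_left hlen.le (by positivity)
    · exact mul_le_mul_of_nonneg_left hlen.le (by positivity)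
  -- Step 3 : the coordinate sequences are Cauchy
  have cauchy_of_bound : ∀ (f : ℕ → ℝ) (B : ℝ), 0 < B →
      (∀ ε : ℝ, 0 < ε → ε ≤ 1 → ∃ N, ∀ m ≥ N, ∀ n ≥ N, |f n - f m| ≤ B * ε) →
      CauchySeq f := by
    intro f B hB hbd
    rw [Metric.cauchySeq_iff]
    intro ε' hε'
    set ε : ℝ := min 1 (ε' / (2 * B)) with hεdef
    have hε : 0 < ε := lt_min one_pos (by positivity)
    obtain ⟨N, hN⟩ := hbd ε hε (min_le_left _ _)
    refine ⟨N, fun m hm n hn => ?_⟩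
    have h1 := hN m hm n hn
    have h2 : B * ε ≤ B * (ε' / (2 * B)) :=
      mul_le_mul_of_nonneg_left (min_le_right _ _) hB.le
    have h3 : B * (ε' / (2 * B)) = ε' / 2 := by field_simp
    rw [Real.dist_eq]
    have : |f n - f m| ≤ ε' / 2 := by rw [← h3]; exact le_trans h1 h2
    rw [abs_sub_comm] at this
    linarith
  have c1 : CauchySeq fun n => (u n).1 := by
    apply cauchy_of_bound _ (C * K) (by positivity)
    intro ε hε hε1
    obtain ⟨N, hN⟩ := main ε hε hε1
    exact ⟨N, fun m hm n hn => (hN m hm n hn).2.1⟩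
  have c2 : CauchySeq fun n => (u n).2 := by
    apply cauchy_of_bound _ (C * K) (by positivity)
    intro ε hε hε1
    obtain ⟨N, hN⟩ := main ε hε hε1
    exact ⟨N, fun m hm n hn => (hN m hm n hn).2.2⟩
  have c3 : CauchySeq fun n => Real.log (u n).1 := by
    apply cauchy_of_bound _ K hK0
    intro ε hε hε1
    obtain ⟨N, hN⟩ := main ε hε hε1
    exact ⟨N, fun m hm n hn => (hN m hm n hn).1⟩
  obtain ⟨x₁, hx1⟩ := cauchySeq_tendsto_of_complete c1
  obtain ⟨x₂, hx2⟩ := cauchySeq_tendsto_of_complete c2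
  obtain ⟨l, hl⟩ := cauchySeq_tendsto_of_complete c3
  -- the limit has positive first coordinate
  have hx1pos : 0 < x₁ := by
    have hexp : Filter.Tendsto (fun n => Real.exp (Real.log (u n).1))
        Filter.atTop (nhds (Real.exp l)) := (Real.continuous_exp.continuousAt.tendsto).comp hl
    have heq : (fun n => Real.exp (Real.log (u n).1)) = fun n => (u n).1 := by
      funext n; exact Real.exp_log (hu n)
    rw [heq] at hexp
    have := tendsto_nhds_unique hx1 hexp
    rw [this]
    exact Real.exp_pos l
  refine ⟨(x₁, x₂), hx1pos, ?_⟩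
  -- Step 4 : convergence in distPlus, via the smooth segment
  intro ε hε
  set δ : ℝ := x₁ / 2 with hδdef
  have hδ0 : 0 < δ := by positivity
  set R : ℝ := 2 * x₁ + |x₂| + 1 with hRdef
  set A : ℝ := Real.sqrt ((1 + 2*R^2)/δ^4) with hAdef
  have hA0 : 0 ≤ A := Real.sqrt_nonneg _
  have hD0 : 0 ≤ D := le_trans (abs_nonneg _) (hD 0 ⟨le_refl 0, zero_le_one⟩)
  set η : ℝ := min (min (x₁/2) 1) (ε / (2 * (A * D + 1))) with hηdef
  have hη0 : 0 < η := lt_min (lt_min (by positivity) one_pos) (by positivity)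
  obtain ⟨N₃, hN₃⟩ := (Metric.tendsto_atTop.1 hx1) η hη0
  obtain ⟨N₄, hN₄⟩ := (Metric.tendsto_atTop.1 hx2) η hη0
  refine ⟨max N₃ N₄, fun n hn => ?_⟩
  have hd1 : |(u n).1 - x₁| < η := by
    have := hN₃ n (le_trans (le_max_left _ _) hn); rwa [Real.dist_eq] at this
  have hd2 : |(u n).2 - x₂| < η := by
    have := hN₄ n (le_trans (le_max_right _ _) hn); rwa [Real.dist_eq] at this
  have hd1' : |(u n).1 - x₁| ≤ x₁/2 := le_trans hd1.le (le_trans (min_le_left _ _) (min_le_left _ _))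
  have hd2' : |(u n).2 - x₂| ≤ 1 := le_trans hd2.le (le_trans (min_le_left _ _) (min_le_right _ _))
  have habs1 := abs_le.1 hd1'
  have habs2 := abs_le.1 hd2'
  -- the geometric bounds needed for the segment
  have hδun : δ ≤ (u n).1 := by rw [hδdef]; linarith
  have hδx : δ ≤ x₁ := by rw [hδdef]; linarith
  have hunR : (u n).1 ≤ R := by rw [hRdef]; linarith [abs_nonneg x₂, hx1pos]
  have hun2R : |(u n).2| ≤ R := by
    rw [hRdef]
    have : |(u n).2| ≤ |x₂| + |(u n).2 - x₂| := by
      calc |(u n).2| = |x₂ + ((u n).2 - x₂)| := by ring_nf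
      _ ≤ _ := abs_add_le _ _
    linarith
  have hxR : x₁ ≤ R := by rw [hRdef]; nlinarith [abs_nonneg x₂, hx1pos]
  have hx2R : |x₂| ≤ R := by rw [hRdef]; nlinarith [hx1pos]
  have hseg := seg_len_le (u n) (x₁, x₂) δ R D hδ0 hδun hδx hunR hun2R hxR hx2R hD
  have hsum : |(x₁, x₂).1 - (u n).1| + |(x₁, x₂).2 - (u n).2| ≤ 2 * η := by
    have e1 : |(x₁, x₂).1 - (u n).1| = |(u n).1 - x₁| := by simp [abs_sub_comm]
    have e2 : |(x₁, x₂).2 - (u n).2| = |(u n).2 - x₂| := by simp [abs_sub_comm]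
    rw [e1, e2]
    linarith [hd1.le, hd2.le]
  have hADpos : (0:ℝ) < A * D + 1 := by positivity
  have hfin : distPlus (u n) (x₁, x₂) ≤ A * D * (2 * η) := by
    refine le_trans hseg ?_
    rw [hAdef]
    exact mul_le_mul_of_nonneg_left hsum (by positivity)
  have h2η : 2 * η ≤ ε / (A * D + 1) := by
    have h1 : η ≤ ε / (2 * (A * D + 1)) := min_le_right _ _
    have h2 : 2 * (ε / (2 * (A * D + 1))) = ε / (A * D + 1) := by
      field_simp
    linarith
  calc distPlus (u n) (x₁, x₂) ≤ A * D * (2 * η) := hfin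
    _ ≤ A * D * (ε / (A * D + 1)) := mul_le_mul_of_nonneg_left h2η (by positivity)
    _ < ε := by
        have e : A * D * (ε / (A * D + 1)) = A * D * ε / (A * D + 1) := by ring
        rw [e, div_lt_iff₀ hADpos]
        nlinarith [mul_nonneg hA0 hD0]
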